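/- arXiv:1901.01148 — 6 statements merged into one kernel-verified Lean document; each statement's English description precedes it below -/
import Mathlib

section
/- Let q be a prime, t a natural number, and f a polynomial over ZMod q with degree at most t. Let S be a finite set of t+1 distinct nonzero elements of ZMod q. Then the secret f(0) is recovered from the t+1 shares {f(i) : i ∈ S} by Lagrange interpolation at 0: f(0) = ∑_{i ∈ S} f(i) · ∏_{j ∈ S, j ≠ i} j · (j − i)⁻¹. -/
open Polynomial Finset

namespace Lagrange

variable {F : Type*} [Field F] [DecidableEq F]

theorem eval_basis_id (s : Finset F) (i x : F) :
    (Lagrange.basis s id i).eval x = ∏ j ∈ s.erase i, (j - x) / (j - i) := by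
  rw [Lagrange.basis, eval_prod]
  refine prod_congr rfl fun j _ => ?_
  simp only [basisDivisor, eval_mul, eval_C, eval_sub, eval_X, id]
  rw [div_eq_mul_inv, ← neg_sub j x, ← neg_sub j i, inv_neg, neg_mul_neg, mul_comm]

theorem eval_eq_sum_eval_mul_prod {s : Finset F} {f : F[X]} (hf : f.degree < #s) (x : F) :
    f.eval x = ∑ i ∈ s, f.eval i * ∏ j ∈ s.erase i, (j - x) / (j - i) := by
  conv_lhs => rw [eq_interpolate (v := id) Function.injective_id.injOn hf]
  simp only [interpolate_apply, eval_finsetSum, eval_mul, eval_C, eval_basis_id, id]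

end Lagrange

theorem shamir_reconstruction_general (q t : ℕ) [Fact q.Prime]
    (f : Polynomial (ZMod q)) (hdeg : f.degree ≤ t)
    (S : Finset (ZMod q)) (hcard : S.card = t + 1) :
    f.eval 0 = ∑ i ∈ S, f.eval i * ∏ j ∈ S.erase i, j * (j - i)⁻¹ := by
  have hdeg_lt : f.degree < #S := by
    rw [hcard]
    exact hdeg.trans_lt (WithBot.coe_lt_coe.mpr t.lt_succ_self)
  simpa only [sub_zero, div_eq_mul_inv] using Lagrange.eval_eq_sum_eval_mul_prod hdeg_lt 0

/-- Shamir secret sharing correctness: `t+1` distinct nonzero shares recover the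
secret `f(0)` via Lagrange interpolation at `0`. -/
theorem shamir_reconstruction (q t : ℕ) [Fact q.Prime]
    (f : Polynomial (ZMod q)) (hdeg : f.degree ≤ t)
    (S : Finset (ZMod q)) (hcard : S.card = t + 1) (hS0 : (0 : ZMod q) ∉ S) :
    f.eval 0 = ∑ i ∈ S, f.eval i * ∏ j ∈ S.erase i, j * (j - i)⁻¹ :=
  shamir_reconstruction_general q t f hdeg S hcard
end

section
/- Let q be a prime and t a natural number. Let S be a finite set of t distinct nonzero elements of ZMod q, let v : ZMod q → ZMod q be an assignment of share values, and let s be any element of ZMod q. Then there exists a unique polynomial f over ZMod q with degree at most t such that f(0) = s and f(i) = v(i) for every i ∈ S. In particular, t shares are consistent with every possible secret, and hence reveal no information about f(0). -/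
/-- Shamir secret sharing secrecy: `t` shares are consistent with every possible
secret `s`, via a unique polynomial of degree at most `t`. -/
theorem shamir_secrecy (q t : ℕ) [Fact q.Prime]
    (S : Finset (ZMod q)) (hcard : S.card = t) (hS0 : (0 : ZMod q) ∉ S)
    (v : ZMod q → ZMod q) (s : ZMod q) :
    ∃! f : Polynomial (ZMod q),
      f.degree ≤ t ∧ f.eval 0 = s ∧ ∀ i ∈ S, f.eval i = v i := by
  set T : Finset (ZMod q) := insert 0 S with hT
  have hTcard : T.card = t + 1 := by
    rw [Finset.card_insert_of_notMem hS0, hcard]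
  have hinj : Set.InjOn (id : ZMod q → ZMod q) T := Function.injective_id.injOn
  set r : ZMod q → ZMod q := fun i => if i = 0 then s else v i with hr
  refine ⟨Lagrange.interpolate T id r, ⟨?_, ?_, ?_⟩, ?_⟩
  · have := Lagrange.degree_interpolate_lt r hinj
    rw [hTcard] at this
    exact Order.le_of_lt_succ (by exact_mod_cast this)
  · have := Lagrange.eval_interpolate_at_node r hinj (Finset.mem_insert_self 0 S)
    simpa [hr] using this
  · intro i hi
    have := Lagrange.eval_interpolate_at_node r hinj
      (Finset.mem_insert_of_mem hi)
    have hi0 : i ≠ 0 := fun h => hS0 (h ▸ hi)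
    simpa [hr, hi0] using this
  · rintro f ⟨hdeg, h0, hv⟩
    apply Lagrange.eq_interpolate_of_eval_eq _ hinj
    · rw [hTcard]
      exact lt_of_le_of_lt hdeg (by exact_mod_cast Nat.lt_succ_self t)
    · intro i hi
      rcases Finset.mem_insert.mp hi with h | h
      · simpa [hr, h] using h0
      · have hi0 : i ≠ 0 := fun h0' => hS0 (h0' ▸ h)
        simpa [hr, hi0] using hv i h
end

section
/- Let q be a prime, t and n natural numbers, and f_1, …, f_n polynomials over ZMod q, each of degree at most t. Define the global polynomial f = f_1 + ⋯ + f_n, the global secret x = ∑_{i=1}^n f_i(0), and the key share of participant j as x_j = ∑_{i=1}^n f_i(j). Then for any finite set S of t+1 distinct nonzero elements of ZMod q, the global secret is reconstructed from the key shares by Lagrange interpolation at 0: x = ∑_{j ∈ S} x_j · ∏_{l ∈ S, l ≠ j} l · (l − j)⁻¹. -/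
/-- Ped-DKG correctness (C1): any `t+1` distinct nonzero key shares
`x_j = ∑ i, f_i(j)` reconstruct the global secret `x = ∑ i, f_i(0)` via
Lagrange interpolation at `0`. -/
theorem pedDKG_reconstruction (q t n : ℕ) [Fact q.Prime]
    (f : Fin n → Polynomial (ZMod q)) (hdeg : ∀ i, (f i).degree ≤ t)
    (S : Finset (ZMod q)) (hcard : S.card = t + 1) (hS0 : (0 : ZMod q) ∉ S) :
    (∑ i, (f i).eval 0) =
      ∑ j ∈ S, (∑ i, (f i).eval j) * ∏ l ∈ S.erase j, l * (l - j)⁻¹ := by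
  set F : Polynomial (ZMod q) := ∑ i, f i with hF
  have hevalF : ∀ x : ZMod q, F.eval x = ∑ i, (f i).eval x := by
    intro x; simp [hF, Polynomial.eval_finset_sum]
  have hdegF : F.degree < (S.card : ℕ) := by
    rw [hcard]
    refine lt_of_le_of_lt (Polynomial.degree_sum_le _ _) ?_
    rw [Finset.sup_lt_iff (by exact_mod_cast WithBot.bot_lt_coe (t + 1))]
    intro i _
    exact lt_of_le_of_lt (hdeg i) (by exact_mod_cast Nat.lt_succ_self t)
  have hinj : Set.InjOn (id : ZMod q → ZMod q) S := Function.injective_id.injOn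
  have key := Lagrange.eq_interpolate hinj hdegF
  have h0 := congrArg (Polynomial.eval 0) key
  rw [Lagrange.interpolate_apply, Polynomial.eval_finset_sum] at h0
  rw [← hevalF 0] at h0 ⊢
  rw [h0, Polynomial.eval_finset_sum]
  refine Finset.sum_congr rfl fun j hj => ?_
  rw [Polynomial.eval_mul, Polynomial.eval_C, id_eq, hevalF j]
  congr 1
  unfold Lagrange.basis
  rw [Polynomial.eval_prod]
  refine Finset.prod_congr rfl fun l hl => ?_
  have hlj : l ≠ j := (Finset.mem_erase.mp hl).1
  have hl0 : l ≠ 0 := fun h => hS0 (h ▸ (Finset.mem_erase.mp hl).2)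
  simp only [Lagrange.basisDivisor, Polynomial.eval_mul, Polynomial.eval_C,
    Polynomial.eval_sub, Polynomial.eval_X, id]
  rw [zero_sub, show (l - j)⁻¹ = -(j - l)⁻¹ by rw [← inv_neg, neg_sub]]
  ring
end

section
/- Let q be a prime, G a group, and g an element of G with orderOf g = q. Let t be a natural number and a : Fin (t+1) → ZMod q a family of polynomial coefficients, with public commitments X_k = g^{(a_k).val} for 0 ≤ k ≤ t. Then for every natural number j and every x : ZMod q, the verification equation g^{x.val} = ∏_{k=0}^{t} (X_k)^{j^k} holds if and only if x = ∑_{k=0}^{t} a_k · (j : ZMod q)^k, i.e., if and only if x is the correct sub-share f(j) of the committed polynomial f(z) = ∑_k a_k z^k. -/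
/-! The commitments turn the verification equation into `g ^ x.val = g ^ f(j)`, with `f(j)`
computed in `ℕ` from the representatives `(a k).val`. Since `g` has order `q`, two powers of `g`
agree exactly when their exponents agree in `ZMod q`, and reducing `f(j)` modulo `q` gives back
`∑ k, a k * j ^ k`. -/

theorem pow_eq_pow_iff_natCast_eq_natCast {G : Type*} [LeftCancelMonoid G] {x : G} {m n : ℕ} :
    x ^ m = x ^ n ↔ (m : ZMod (orderOf x)) = n := by
  rw [pow_eq_pow_iff_modEq, ZMod.natCast_eq_natCast_iff]

theorem Finset.prod_pow_pow_eq_pow_sum {ι M : Type*} [CommMonoid M] (s : Finset ι) (x : M)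
    (c e : ι → ℕ) : ∏ k ∈ s, (x ^ c k) ^ e k = x ^ ∑ k ∈ s, c k * e k := by
  simp only [← pow_mul, Finset.prod_pow_eq_pow_sum]

/-- Feldman VSS sub-share verification: the check
`g ^ x.val = ∏ k, (X k) ^ (j ^ k)` with commitments `X k = g ^ (a k).val`
holds iff `x` equals the correct sub-share `f(j) = ∑ k, a k * j ^ k`. -/
theorem feldman_subshare_verification (q t : ℕ) [Fact q.Prime]
    {G : Type*} [CommGroup G] (g : G) (hg : orderOf g = q)
    (a : Fin (t + 1) → ZMod q) (X : Fin (t + 1) → G)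
    (hX : ∀ k, X k = g ^ (a k).val)
    (j : ℕ) (x : ZMod q) :
    g ^ x.val = ∏ k : Fin (t + 1), (X k) ^ (j ^ (k : ℕ)) ↔
      x = ∑ k : Fin (t + 1), a k * (j : ZMod q) ^ (k : ℕ) := by
  simp only [hX]
  rw [Finset.prod_pow_pow_eq_pow_sum, pow_eq_pow_iff_natCast_eq_natCast, hg]
  push_cast [ZMod.natCast_zmod_val]
  rfl
end

section
/- Let q be a prime, G a group, and g an element of G with orderOf g = q. Let t and n be natural numbers and a : Fin n → Fin (t+1) → ZMod q the local polynomial coefficients of the n participants, with public commitments X_{i,k} = g^{(a_{i,k}).val}. Then for every natural number j, the public key share of participant j is computable from the public commitments alone: g^{(∑_{i} ∑_{k} a_{i,k} · (j : ZMod q)^k).val} = ∏_{i=1}^{n} ∏_{k=0}^{t} (X_{i,k})^{j^k}. In particular (taking j = 0), the global public key satisfies g^{x.val} = ∏_{i=1}^{n} X_{i,0}, where x = ∑_i a_{i,0} is the global secret. -/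
theorem pow_val_natCast_of_orderOf_eq {G : Type*} [Monoid G] {q : ℕ} {g : G}
    (hg : orderOf g = q) (m : ℕ) : g ^ (m : ZMod q).val = g ^ m := by
  rw [ZMod.val_natCast, ← hg, pow_mod_orderOf]

/-- Ped-DKG correctness (C2): any participant's public key share is computable
from the public commitments `X i k = g ^ (a i k).val` alone. -/
theorem pedDKG_public_key_share (q t n : ℕ) [Fact q.Prime]
    {G : Type*} [CommGroup G] (g : G) (hg : orderOf g = q)
    (a : Fin n → Fin (t + 1) → ZMod q) (X : Fin n → Fin (t + 1) → G)
    (hX : ∀ i k, X i k = g ^ (a i k).val) (j : ℕ) :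
    g ^ (∑ i, ∑ k, a i k * (j : ZMod q) ^ (k : ℕ)).val =
      ∏ i, ∏ k : Fin (t + 1), (X i k) ^ (j ^ (k : ℕ)) := by
  have hexp : ∑ i, ∑ k, a i k * (j : ZMod q) ^ (k : ℕ) =
      ((∑ i, ∑ k, (a i k).val * j ^ (k : ℕ) : ℕ) : ZMod q) := by
    push_cast [ZMod.natCast_zmod_val]
    rfl
  rw [hexp, pow_val_natCast_of_orderOf_eq hg]
  simp_rw [hX, ← pow_mul, Finset.prod_pow_eq_pow_sum]
end

section
/- Let t, Δ, R, a be real numbers with t ≥ 1, Δ > 0, 0 < a ≤ (t+1)/2, and R < (t−1)·Δ. Then R·a/(t+1) < (t−a)·Δ. That is, an entity controlling a participants earns strictly less from a successful collusion (at most R·a/(t+1)) than from framing (which pays (t−a)·Δ), so framing is the dominant strategy for any entity controlling fewer than (t+1)/2 participants. -/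
/-! Clearing the denominator, `R * a < (t - 1) * a * Δ`, and the gap
`(t - a) * (t + 1) - (t - 1) * a = t * (t + 1 - 2 * a)` is nonnegative when `2 * a ≤ t + 1`. -/

lemma sub_one_mul_le_sub_mul_add_one {t a : ℝ} (ht : 0 ≤ t) (ha : 2 * a ≤ t + 1) :
    (t - 1) * a ≤ (t - a) * (t + 1) := by
  have gap : (t - a) * (t + 1) - (t - 1) * a = t * (t + 1 - 2 * a) := by ring
  have gap_nonneg : 0 ≤ t * (t + 1 - 2 * a) := mul_nonneg ht (by linarith)
  linarith

/-- Framing dominance: an entity controlling `a ≤ (t+1)/2` participants earns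
strictly less from collusion (`R·a/(t+1)`) than from framing (`(t−a)·Δ`),
provided `R < (t−1)·Δ`. -/
theorem framing_dominant (t Δ R a : ℝ)
    (ht : t ≥ 1) (hΔ : Δ > 0) (ha0 : 0 < a) (ha : a ≤ (t + 1) / 2)
    (hR : R < (t - 1) * Δ) :
    R * a / (t + 1) < (t - a) * Δ := by
  rw [div_lt_iff₀ (by linarith)]
  calc R * a < (t - 1) * Δ * a := mul_lt_mul_of_pos_right hR ha0
    _ = (t - 1) * a * Δ := by ring
    _ ≤ (t - a) * (t + 1) * Δ :=
        mul_le_mul_of_nonneg_right (sub_one_mul_le_sub_mul_add_one (by linarith) (by linarith))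
          hΔ.le
    _ = (t - a) * Δ * (t + 1) := by ring
end
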